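/- arXiv:2211.16269 — 9 statements merged into one kernel-verified Lean document; each statement's English description precedes it below -/
import Mathlib

section
/- For every finite coloring of the natural numbers into r colors, there exists a monochromatic Schur triple: natural numbers a, b such that a, b, and a+b all have the same color. -/
/-- Schur's Theorem: every finite coloring of the natural numbers admits a
monochromatic Schur triple `{a, b, a+b}`. -/
theorem schur (r : ℕ) (c : ℕ → Fin r) :
    ∃ a b : ℕ, 0 < a ∧ 0 < b ∧ c a = c b ∧ c a = c (a + b) := by
  rcases Nat.eq_zero_or_pos r with rfl | hr
  · exact (c 1).elim0
  have := Hindman.exists_FS_of_finite_cover (M := ℕ+)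
    ((fun i : Fin r => {n : ℕ+ | c n = i}) '' Set.univ)
    ((Set.finite_univ.image _))
    (by intro n _; exact Set.mem_sUnion.2 ⟨_, ⟨c n, Set.mem_univ _, rfl⟩, rfl⟩)
  obtain ⟨s, ⟨i, -, rfl⟩, a, ha⟩ := this
  refine ⟨a.get 0, a.get 1, (a.get 0).pos, (a.get 1).pos, ?_, ?_⟩
  · have h1 := ha (Hindman.FS.singleton a 0)
    have h2 := ha (Hindman.FS.singleton a 1)
    simp only [Set.mem_setOf_eq] at h1 h2
    rw [h1, h2]
  · have h1 := ha (Hindman.FS.singleton a 0)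
    have h3 := ha (Hindman.FS.add_two a 0 1 Nat.zero_lt_one)
    simp only [Set.mem_setOf_eq] at h1 h3
    rw [h1, ← h3, PNat.add_coe]
end

section
/- For every finite coloring of ℕ and every k, there exist natural numbers x_1 < x_2 < ... < x_k such that all sums of nonempty subsets of {x_1,...,x_k} receive the same color. -/
open Finset

/-- A finitary van der Waerden theorem with a bound uniform in the coloring. -/
lemma vdw_fin (r L : ℕ) : ∃ N : ℕ, ∀ c : ℕ → Fin r,
    ∃ d, 0 < d ∧ ∃ A, d * L < A ∧ A + d * L ≤ N ∧ ∀ t ≤ L, c (A + d * t) = c A := by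
  obtain ⟨ι, _inst, hι⟩ :=
    Combinatorics.Line.exists_mono_in_high_dimension (Fin (2 * L + 2)) (Fin r)
  refine ⟨Fintype.card ι * (2 * L + 1), fun c => ?_⟩
  classical
  obtain ⟨l, c₀, hl⟩ := hι fun v => c (∑ i, (v i : ℕ))
  set s : Finset ι := Finset.univ.filter (fun i => l.idxFun i = none) with hs
  set d := s.card with hd
  set b := ∑ i ∈ sᶜ, ((l.idxFun i).map (fun m : Fin (2 * L + 2) => (m : ℕ))).getD 0 with hb
  have keysum : ∀ a : Fin (2 * L + 2), (∑ i, (((l.idxFun i).getD a : Fin (2*L+2)) : ℕ)) = d * a + b := by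
    intro a
    rw [← Finset.sum_add_sum_compl s]
    congr 1
    · calc ∑ i ∈ s, (((l.idxFun i).getD a : Fin (2*L+2)) : ℕ)
          = ∑ _i ∈ s, (a : ℕ) := Finset.sum_congr rfl (fun i hi => by
            rw [hs, Finset.mem_filter] at hi
            rw [hi.right]
            rfl)
        _ = d * a := by rw [Finset.sum_const, smul_eq_mul]
    · apply Finset.sum_congr rfl
      intro i hi
      rw [hs, Finset.compl_filter, Finset.mem_filter] at hi
      obtain ⟨y, hy⟩ := Option.ne_none_iff_exists.mp hi.right
      simp_rw [← hy, Option.map_some, Option.getD]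
  have key : ∀ a : Fin (2 * L + 2), c (d * a + b) = c₀ := by
    intro a
    rw [← keysum a]
    exact hl a
  have hdpos : 0 < d := by
    rw [hd, Finset.card_pos]
    exact ⟨l.proper.choose, by
      rw [hs, Finset.mem_filter]; exact ⟨Finset.mem_univ _, l.proper.choose_spec⟩⟩
  have hbound : ∀ a : Fin (2 * L + 2), d * a + b ≤ Fintype.card ι * (2 * L + 1) := by
    intro a
    rw [← keysum a, ← Finset.card_univ]
    calc (∑ i, (((l.idxFun i).getD a : Fin (2*L+2)) : ℕ))
        ≤ Finset.univ.card • (2 * L + 1) := Finset.sum_le_card_nsmul _ _ _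
          (fun i _ => by have := ((l.idxFun i).getD a).isLt; omega)
      _ = Finset.univ.card * (2 * L + 1) := by rw [smul_eq_mul]
  refine ⟨d, hdpos, d * (L + 1) + b, ?_, ?_, ?_⟩
  · have h := Nat.mul_succ d L
    nlinarith
  · have h := hbound ⟨2 * L + 1, by omega⟩
    simp only [Fin.val_mk] at h
    nlinarith
  · intro t ht
    have h1 : d * (L + 1) + b + d * t = d * ((L + 1 + t : ℕ)) + b := by ring
    have e1 := key ⟨L + 1 + t, by omega⟩
    have e0 := key ⟨L + 1, by omega⟩
    simp only [Fin.val_mk] at e1 e0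
    rw [h1, e1]
    have h0 : d * (L + 1) + b = d * (L + 1) + b := rfl
    rw [e0]

/-- The key iterated lemma: there is a uniform bound `N` such that for every coloring
one can find `m` numbers all of whose nonempty subset sums are at most `N` and whose
color depends only on the maximal index involved. -/
lemma folkman_aux (r : ℕ) : ∀ m : ℕ, ∃ N : ℕ, ∀ c : ℕ → Fin r,
    ∃ y : Fin m → ℕ, StrictMono y ∧ (∀ i, 0 < y i) ∧
      (∀ F : Finset (Fin m), ∑ i ∈ F, y i ≤ N) ∧
      ∀ (F : Finset (Fin m)) (hF : F.Nonempty), c (∑ i ∈ F, y i) = c (y (F.max' hF)) := by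
  intro m
  induction m with
  | zero =>
      exact ⟨0, fun c => ⟨fun i => i.elim0, fun i => i.elim0, fun i => i.elim0,
        fun F => by simp [Finset.eq_empty_of_isEmpty F],
        fun F hF => absurd hF (by simp [Finset.eq_empty_of_isEmpty F])⟩⟩
  | succ m ih =>
      obtain ⟨N, hN⟩ := ih
      obtain ⟨N', hN'⟩ := vdw_fin r N
      refine ⟨N', fun c => ?_⟩
      obtain ⟨d, hd, A, hA1, hA2, hA3⟩ := hN' c
      obtain ⟨y, hy_mono, hy_pos, hy_bd, hy_col⟩ := hN (fun t => c (d * t))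
      set x : Fin (m + 1) → ℕ := Fin.snoc (fun i => d * y i) A with hx
      have hxc : ∀ i : Fin m, x i.castSucc = d * y i := fun i => Fin.snoc_castSucc _ _ _
      have hxl : x (Fin.last m) = A := Fin.snoc_last _ _
      have hyN : ∀ i : Fin m, y i ≤ N := by
        intro i
        have := hy_bd {i}
        simpa using this
      have hdy_lt_A' : ∀ i : Fin m, d * y i < A := fun i =>
        lt_of_le_of_lt (Nat.mul_le_mul_left d (hyN i)) hA1
      -- decomposition of an arbitrary subset
      have hdecomp : ∀ F : Finset (Fin (m + 1)),
          Fin.last m ∉ F →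
          F = (Finset.univ.filter (fun i : Fin m => i.castSucc ∈ F)).image Fin.castSucc := by
        intro F hF
        ext j
        simp only [Finset.mem_image, Finset.mem_filter, Finset.mem_univ, true_and]
        constructor
        · intro hj
          have hne : j ≠ Fin.last m := fun h => hF (h ▸ hj)
          obtain ⟨i, rfl⟩ := Fin.exists_castSucc_eq.mpr hne
          exact ⟨i, hj, rfl⟩
        · rintro ⟨i, hi, rfl⟩; exact hi
      have hsum_nolast : ∀ F : Finset (Fin (m + 1)), Fin.last m ∉ F →
          ∑ i ∈ F, x i = d * ∑ i ∈ Finset.univ.filter (fun i : Fin m => i.castSucc ∈ F), y i := by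
        intro F hF
        rw [Finset.mul_sum]
        conv_lhs => rw [hdecomp F hF]
        rw [Finset.sum_image (fun a _ b _ h => Fin.castSucc_injective _ h)]
        exact Finset.sum_congr rfl fun i _ => hxc i
      have hsum_last : ∀ F : Finset (Fin (m + 1)), Fin.last m ∈ F →
          ∑ i ∈ F, x i
            = A + d * ∑ i ∈ Finset.univ.filter (fun i : Fin m => i.castSucc ∈ F), y i := by
        intro F hF
        have h1 : Fin.last m ∉ F.erase (Fin.last m) := Finset.notMem_erase _ _
        have hfe : Finset.univ.filter (fun i : Fin m => i.castSucc ∈ F.erase (Fin.last m))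
            = Finset.univ.filter (fun i : Fin m => i.castSucc ∈ F) := by
          ext i
          simp only [Finset.mem_filter, Finset.mem_univ, true_and, Finset.mem_erase]
          exact ⟨fun h => h.2, fun h => ⟨(Fin.castSucc_lt_last i).ne, h⟩⟩
        calc ∑ i ∈ F, x i
            = ∑ i ∈ insert (Fin.last m) (F.erase (Fin.last m)), x i := by
              rw [Finset.insert_erase hF]
          _ = A + d * ∑ i ∈ Finset.univ.filter (fun i : Fin m => i.castSucc ∈ F), y i := by
              rw [Finset.sum_insert h1, hxl, hsum_nolast _ h1, hfe]
      refine ⟨x, ?_, ?_, ?_, ?_⟩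
      · -- strict mono
        intro i j hij
        rcases Fin.eq_castSucc_or_eq_last j with ⟨j', rfl⟩ | rfl
        · have hine : i ≠ Fin.last m := (hij.trans (Fin.castSucc_lt_last j')).ne
          obtain ⟨i', rfl⟩ := Fin.exists_castSucc_eq.mpr hine
          rw [hxc, hxc]
          exact mul_lt_mul_of_pos_left (hy_mono (Fin.castSucc_lt_castSucc_iff.mp hij)) hd
        · have hine : i ≠ Fin.last m := hij.ne
          obtain ⟨i', rfl⟩ := Fin.exists_castSucc_eq.mpr hine
          rw [hxc, hxl]
          exact hdy_lt_A' i'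
      · -- positivity
        intro i
        rcases Fin.eq_castSucc_or_eq_last i with ⟨i', rfl⟩ | rfl
        · rw [hxc]; exact Nat.mul_pos hd (hy_pos i')
        · rw [hxl]; omega
      · -- bound
        intro F
        by_cases hF : Fin.last m ∈ F
        · rw [hsum_last F hF]
          have : d * ∑ i ∈ Finset.univ.filter (fun i : Fin m => i.castSucc ∈ F), y i
              ≤ d * N := Nat.mul_le_mul_left d (hy_bd _)
          omega
        · rw [hsum_nolast F hF]
          have : d * ∑ i ∈ Finset.univ.filter (fun i : Fin m => i.castSucc ∈ F), y i
              ≤ d * N := Nat.mul_le_mul_left d (hy_bd _)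
          omega
      · -- colors determined by max
        intro F hF
        by_cases hFl : Fin.last m ∈ F
        · have hmax : F.max' hF = Fin.last m :=
            le_antisymm (Finset.max'_le _ _ _ fun i _ => Fin.le_last i)
              (Finset.le_max' _ _ hFl)
          rw [hsum_last F hFl, hmax, hxl]
          exact hA3 _ (hy_bd _)
        · set G := Finset.univ.filter (fun i : Fin m => i.castSucc ∈ F) with hG
          have hFG : F = G.image Fin.castSucc := hdecomp F hFl
          have hGne : G.Nonempty := by
            rw [hFG] at hF
            exact Finset.Nonempty.of_image hF
          have hmax : F.max' hF = Fin.castSucc (G.max' hGne) := by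
            apply le_antisymm
            · apply Finset.max'_le
              intro i hi
              rw [hFG, Finset.mem_image] at hi
              obtain ⟨i', hi', rfl⟩ := hi
              exact Fin.castSucc_le_castSucc_iff.mpr (Finset.le_max' _ _ hi')
            · apply Finset.le_max'
              rw [hFG, Finset.mem_image]
              exact ⟨G.max' hGne, G.max'_mem hGne, rfl⟩
          rw [hsum_nolast F hFl, hmax, hxc]
          exact hy_col G hGne

/-- Folkman–Sanders Theorem: for every finite coloring of ℕ and every `k`, there
exist `x 0 < x 1 < ... < x (k-1)` such that all sums of nonempty subsets of the
`x i` receive the same color. -/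
theorem folkman_sanders (r : ℕ) (c : ℕ → Fin r) (k : ℕ) :
    ∃ x : Fin k → ℕ, StrictMono x ∧ (∀ i, 0 < x i) ∧
      ∃ j : Fin r, ∀ F : Finset (Fin k), F.Nonempty → c (∑ i ∈ F, x i) = j := by
  obtain ⟨N, hN⟩ := folkman_aux r (r * k + 1)
  obtain ⟨y, hmono, hpos, hbd, hcol⟩ := hN c
  set g : Fin (r * k + 1) → Fin r := fun i => c (y i) with hg
  obtain ⟨j, -, hj⟩ :=
    Finset.exists_lt_card_fiber_of_mul_lt_card_of_maps_to
      (s := (Finset.univ : Finset (Fin (r * k + 1)))) (t := (Finset.univ : Finset (Fin r)))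
      (n := k) (f := g) (fun a _ => Finset.mem_univ _)
      (by simp only [Finset.card_univ, Fintype.card_fin]; omega)
  obtain ⟨S, hST, hScard⟩ := Finset.exists_subset_card_eq (le_of_lt hj)
  set ι := S.orderEmbOfFin hScard with hι
  refine ⟨fun i => y (ι i), hmono.comp (OrderEmbedding.strictMono ι), fun i => hpos _, j, ?_⟩
  intro F hF
  have hmem : ∀ i : Fin k, g (ι i) = j := by
    intro i
    have h1 : ι i ∈ S := S.orderEmbOfFin_mem hScard i
    have h2 := hST h1
    rw [Finset.mem_filter] at h2
    exact h2.2
  have hsum : ∑ i ∈ F, y (ι i) = ∑ i ∈ F.map ι.toEmbedding, y i :=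
    (Finset.sum_map F ι.toEmbedding y).symm
  have hFm : (F.map ι.toEmbedding).Nonempty := hF.map
  rw [hsum, hcol _ hFm]
  have hmax : (F.map ι.toEmbedding).max' hFm = ι (F.max' hF) := by
    apply le_antisymm
    · apply Finset.max'_le
      intro i hi
      rw [Finset.mem_map] at hi
      obtain ⟨i', hi', rfl⟩ := hi
      exact ι.monotone (Finset.le_max' _ _ hi')
    · apply Finset.le_max'
      rw [Finset.mem_map]
      exact ⟨F.max' hF, F.max'_mem hF, rfl⟩
  rw [hmax]
  exact hmem _
end

section
/- For every finite coloring of ℕ there exists a strictly increasing infinite sequence (x_n) such that the set FS(x_n) = { ∑_{i∈F} x_i : F a nonempty finite subset of ℕ } is monochromatic. -/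
/-!
Mathlib's Hindman theorem for `ℕ+` (via idempotent ultrafilters) yields a sequence `b` of positive
integers whose finite sums all have the same color, but `b` need not be increasing. Cut `b` into
consecutive blocks, each longer than the sum of all terms before it. As every term is at least `1`,
a block sum is at least the block's length, so the block sums increase strictly; and a finite sum
of distinct block sums is a finite sum of distinct terms of `b`.
-/

open Finset Function

namespace Hindman

theorem FS_map_subset {M N : Type*} [AddSemigroup M] [AddSemigroup N] (f : M →ₙ+ N)
    (a : Stream' M) : FS (a.map f) ⊆ f '' FS a := by
  suffices ∀ b m, m ∈ FS b → ∀ a : Stream' M, b = a.map f → m ∈ f '' FS a from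
    fun m hm => this _ m hm a rfl
  intro b m hm
  induction hm with
  | head' b =>
    rintro a rfl
    exact ⟨a.head, FS.head a, rfl⟩
  | tail' b m _ ih =>
    rintro a rfl
    obtain ⟨x, hx, rfl⟩ := ih a.tail (Stream'.tail_map f a)
    exact ⟨x, FS.tail a x hx, rfl⟩
  | cons' b m _ ih =>
    rintro a rfl
    obtain ⟨x, hx, rfl⟩ := ih a.tail (Stream'.tail_map f a)
    exact ⟨a.head + x, FS.cons a x hx, map_add f _ _⟩

end Hindman

def blockBoundary (b : Stream' ℕ) : ℕ → ℕ
  | 0 => 0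
  | n + 1 => blockBoundary b n + (∑ i ∈ range (blockBoundary b n), b.get i) + 1

def block (b : Stream' ℕ) (n : ℕ) : Finset ℕ := Ico (blockBoundary b n) (blockBoundary b (n + 1))

def blockSum (b : Stream' ℕ) (n : ℕ) : ℕ := ∑ i ∈ block b n, b.get i

section Blocks

variable (b : Stream' ℕ)

theorem blockBoundary_strictMono : StrictMono (blockBoundary b) :=
  strictMono_nat_of_lt_succ fun n => by simp only [blockBoundary]; omega

theorem card_block (n : ℕ) :
    #(block b n) = (∑ i ∈ range (blockBoundary b n), b.get i) + 1 := by
  simp only [block, Nat.card_Ico, blockBoundary]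
  omega

theorem block_nonempty (n : ℕ) : (block b n).Nonempty :=
  nonempty_Ico.2 (blockBoundary_strictMono b n.lt_succ_self)

theorem block_subset_range (n : ℕ) : block b n ⊆ range (blockBoundary b (n + 1)) :=
  fun _ hi => mem_range.2 (mem_Ico.1 hi).2

theorem pairwise_disjoint_block : Pairwise (Disjoint on block b) := by
  intro m n hmn
  wlog h : m < n generalizing m n
  · exact (this hmn.symm (hmn.lt_or_gt.resolve_left h)).symm
  refine disjoint_left.2 fun i hm hn => ?_
  have : blockBoundary b (m + 1) ≤ blockBoundary b n := (blockBoundary_strictMono b).monotone h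
  simp only [block, mem_Ico] at hm hn
  omega

theorem blockSum_lt_card_block_succ (n : ℕ) : blockSum b n < #(block b (n + 1)) := by
  rw [card_block, Nat.lt_succ_iff]
  exact sum_le_sum_of_subset (block_subset_range b n)

theorem sum_blockSum_mem_FS {F : Finset ℕ} (hF : F.Nonempty) :
    ∑ n ∈ F, blockSum b n ∈ Hindman.FS b := by
  simp only [blockSum]
  rw [← sum_biUnion ((pairwise_disjoint_block b).set_pairwise _)]
  exact Hindman.FS.finsetSum b _ (hF.biUnion fun n _ => block_nonempty b n)

variable {b}

theorem card_block_le_blockSum (hb : ∀ i, 0 < b.get i) (n : ℕ) : #(block b n) ≤ blockSum b n :=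
  (card_eq_sum_ones _).trans_le (sum_le_sum fun i _ => hb i)

theorem blockSum_strictMono (hb : ∀ i, 0 < b.get i) : StrictMono (blockSum b) :=
  strictMono_nat_of_lt_succ fun n =>
    (blockSum_lt_card_block_succ b n).trans_le (card_block_le_blockSum hb _)

theorem blockSum_pos (hb : ∀ i, 0 < b.get i) (n : ℕ) : 0 < blockSum b n :=
  (card_pos.2 (block_nonempty b n)).trans_le (card_block_le_blockSum hb n)

end Blocks

/-- Hindman's Theorem: for every finite coloring of ℕ there is a strictly
increasing infinite sequence all of whose finite sums of distinct terms are
monochromatic. -/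
theorem hindman (r : ℕ) (c : ℕ → Fin r) :
    ∃ x : ℕ → ℕ, StrictMono x ∧ (∀ n, 0 < x n) ∧
      ∃ j : Fin r, ∀ F : Finset ℕ, F.Nonempty → c (∑ i ∈ F, x i) = j := by
  obtain ⟨_, ⟨j, rfl⟩, a, haj⟩ := Hindman.exists_FS_of_finite_cover
    (Set.range fun j : Fin r => {n : ℕ+ | c n = j}) (Set.finite_range _)
    fun n _ => ⟨_, ⟨c n, rfl⟩, rfl⟩
  have hb : ∀ i, 0 < (a.map PNat.coeAddHom).get i := fun i => (a.get i).pos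
  refine ⟨blockSum _, blockSum_strictMono hb, blockSum_pos hb, j, fun F hF => ?_⟩
  obtain ⟨m, hm, hmF⟩ := Hindman.FS_map_subset PNat.coeAddHom a (sum_blockSum_mem_FS _ hF)
  exact hmF ▸ haj hm
end

section
/- In a compact Hausdorff right-topological semigroup, every left ideal contains a minimal left ideal, and every minimal left ideal contains an idempotent element. -/
section

variable {S : Type*} [Semigroup S]

/-- A (nonempty) left ideal of a semigroup: `S · L ⊆ L`. -/
def IsLeftIdeal (L : Set S) : Prop :=
  L.Nonempty ∧ ∀ u v : S, v ∈ L → u * v ∈ L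

/-- A minimal left ideal: a left ideal containing no proper left ideal. -/
def IsMinimalLeftIdeal (L : Set S) : Prop :=
  IsLeftIdeal L ∧ ∀ L' : Set S, IsLeftIdeal L' → L' ⊆ L → L' = L

end

/-- In a compact Hausdorff right-topological semigroup, every left ideal
contains a minimal left ideal, and every minimal left ideal contains an
idempotent. -/
theorem minimal_left_ideals_and_idempotents (S : Type*) [Semigroup S]
    [TopologicalSpace S] [CompactSpace S] [T2Space S]
    (hright : ∀ v : S, Continuous fun x : S => x * v) :
    (∀ L : Set S, IsLeftIdeal L → ∃ M : Set S, M ⊆ L ∧ IsMinimalLeftIdeal M) ∧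
    (∀ L : Set S, IsMinimalLeftIdeal L → ∃ e ∈ L, e * e = e) := by
  have hrangeIdeal : ∀ w : S, IsLeftIdeal (Set.range fun x : S => x * w) := by
    intro w
    refine ⟨⟨w * w, w, rfl⟩, ?_⟩
    rintro u v ⟨x, rfl⟩
    exact ⟨u * x, mul_assoc u x w⟩
  constructor
  · intro L hL
    obtain ⟨v, hv⟩ := hL.1
    set C : Set (Set S) := {t | t ⊆ L ∧ IsClosed t ∧ IsLeftIdeal t} with hC
    have key : ∀ w ∈ L, Set.range (fun x : S => x * w) ∈ C := by
      intro w hw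
      refine ⟨?_, (isCompact_range (hright w)).isClosed, hrangeIdeal w⟩
      rintro y ⟨x, rfl⟩
      exact hL.2 x w hw
    have hchain : ∀ c ⊆ C, IsChain (· ⊆ ·) c → c.Nonempty →
        ∃ lb ∈ C, ∀ s ∈ c, lb ⊆ s := by
      intro c hcC hchain ⟨t0, ht0⟩
      haveI : Nonempty c := ⟨⟨t0, ht0⟩⟩
      have hne : (⋂₀ c).Nonempty := by
        apply IsCompact.nonempty_sInter_of_directed_nonempty_isCompact_isClosed
        · intro x hx y hy
          rcases eq_or_ne x y with rfl | hne
          · exact ⟨x, hx, subset_rfl, subset_rfl⟩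
          · rcases hchain hx hy hne with h | h
            · exact ⟨x, hx, subset_rfl, h⟩
            · exact ⟨y, hy, h, subset_rfl⟩
        · exact fun U hU => (hcC hU).2.2.1
        · exact fun U hU => (hcC hU).2.1.isCompact
        · exact fun U hU => (hcC hU).2.1
      refine ⟨⋂₀ c, ⟨?_, isClosed_sInter fun U hU => (hcC hU).2.1, hne, ?_⟩,
        fun s hs => Set.sInter_subset_of_mem hs⟩
      · exact (Set.sInter_subset_of_mem ht0).trans (hcC ht0).1
      · intro u w hw
        exact Set.mem_sInter.mpr fun U hU => (hcC hU).2.2.2 u w (Set.mem_sInter.mp hw U hU)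
    obtain ⟨M, hML, hMmin⟩ := zorn_superset_nonempty C hchain _ (key v hv)
    refine ⟨M, hMmin.prop.1, hMmin.prop.2.2, ?_⟩
    intro L' hL' hL'M
    obtain ⟨w, hw⟩ := hL'.1
    have hwL : w ∈ L := hMmin.prop.1 (hL'M hw)
    have hrC : Set.range (fun x : S => x * w) ∈ C := key w hwL
    have hsub : Set.range (fun x : S => x * w) ⊆ L' := by
      rintro y ⟨x, rfl⟩
      exact hL'.2 x w hw
    have heq : Set.range (fun x : S => x * w) = M :=
      le_antisymm (hsub.trans hL'M) (hMmin.2 hrC (hsub.trans hL'M))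
    exact le_antisymm hL'M (heq ▸ hsub)
  · intro L hL
    obtain ⟨v, hv⟩ := hL.1.1
    have hsub : Set.range (fun x : S => x * v) ⊆ L := by
      rintro y ⟨x, rfl⟩
      exact hL.1.2 x v hv
    have heq := hL.2 _ (hrangeIdeal v) hsub
    have hLcomp : IsCompact L := heq ▸ isCompact_range (hright v)
    exact exists_idempotent_in_compact_subsemigroup hright L hL.1.1 hLcomp
      fun x _ y hy => hL.1.2 x y hy
end

section
/- Let g_n : ℕ → ℕ be defined for n ≥ 2 by g_2(k) = k and g_{n+1}(k) = k^{g_n(k)} (towers of exponentiation of height n−1). Then for all n ≥ 3 and all k ≥ 2, g_n(k) · k < g_n(k+1). -/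
/-- For the tower-of-exponentiation functions `g_2(k) = k`,
`g_{n+1}(k) = k ^ g_n(k)`, one has `g_n(k) · k < g_n(k+1)` for all `n ≥ 3`
and `k ≥ 2`. -/
theorem tower_mul_lt (g : ℕ → ℕ → ℕ)
    (h2 : ∀ k, g 2 k = k)
    (hsucc : ∀ n, 2 ≤ n → ∀ k, g (n + 1) k = k ^ g n k) :
    ∀ n, 3 ≤ n → ∀ k, 2 ≤ k → g n k * k < g n (k + 1) := by
  -- g n k ≥ k for n ≥ 2, k ≥ 2
  have hge : ∀ n, 2 ≤ n → ∀ k, 2 ≤ k → k ≤ g n k := by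
    intro n hn
    induction n, hn using Nat.le_induction with
    | base => intro k hk; rw [h2]
    | succ n hn ih =>
      intro k hk
      rw [hsucc n hn k]
      calc k = k ^ 1 := (pow_one k).symm
        _ ≤ k ^ g n k := Nat.pow_le_pow_right (by omega) (by
            have := ih k hk; omega)
  intro n hn
  induction n, hn using Nat.le_induction with
  | base =>
    intro k hk
    rw [hsucc 2 le_rfl k, hsucc 2 le_rfl (k + 1), h2, h2]
    calc k ^ k * k = k ^ (k + 1) := (pow_succ k k).symm
      _ < (k + 1) ^ (k + 1) := Nat.pow_lt_pow_left (by omega) (by omega)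
  | succ n hn ih =>
    intro k hk
    have hn2 : 2 ≤ n := by omega
    have hg1 : 1 ≤ g n k := le_trans (by omega) (hge n hn2 k hk)
    have hih := ih k hk
    rw [hsucc n hn2 k, hsucc n hn2 (k + 1)]
    calc k ^ g n k * k = k ^ (g n k + 1) := (pow_succ k (g n k)).symm
      _ ≤ k ^ (g n k * k) := Nat.pow_le_pow_right (by omega) (by nlinarith)
      _ ≤ (k + 1) ^ (g n k * k) := Nat.pow_le_pow_left (by omega) _
      _ < (k + 1) ^ g n (k + 1) := Nat.pow_lt_pow_right (by omega) hih
end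

section
/- Define, for a strictly increasing finite sequence a_1 < ... < a_n of natural numbers ≥ 2, EXP(a_1) = {a_1} and EXP(a_1,...,a_i) = { a_i^(e_{i-1}·...·e_1) : e_t ∈ EXP(a_1,...,a_t) ∪ {1} for t = 1,...,i−1 }, and let m_i = max EXP(a_1,...,a_i). Let f_n be the tower function of height n−1: f_2(k)=k, f_{n+1}(k)=k^{f_n(k)}. Then for every i with 2 ≤ i ≤ n, f_i(a_{i-1}) ≥ m_{i-1} · m_{i-2} · ... · m_1. -/
/-- The sets of exponentiations: `EXP a 1 = {a 1}` and
`EXP a i = { a i ^ (e_{i-1} ⋯ e_1) | e_t ∈ EXP a t ∪ {1} for 1 ≤ t < i }`. -/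
def EXP (a : ℕ → ℕ) (i : ℕ) : Set ℕ :=
  { x | ∃ e : ℕ → ℕ, (∀ t, 0 < t → t < i → e t ∈ EXP a t ∪ {1}) ∧
      x = a i ^ ∏ t ∈ Finset.Ico 1 i, e t }
termination_by i

/-!
Since every element of `EXP a t` is at least `1`, the maximum of `EXP a i` is obtained by taking
every exponent maximal, so `m i = a i ^ P i` with `P i = m 1 ⋯ m (i - 1)`, and hence
`P (i + 1) = P i * a i ^ P i`. The bound `P i ≤ f i (a (i - 1))` then follows by induction on `i`:
for `i = 2` because `P 2 = a 1 < a 2`, and for `i ≥ 3` because `P * l ^ P ≤ l ^ (2 * P)` while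
the tower at least doubles between `a (i - 1)` and `a i`.
-/

theorem tower_strictMonoOn {f : ℕ → ℕ → ℕ} (hf2 : ∀ k, f 2 k = k)
    (hfsucc : ∀ j, 2 ≤ j → ∀ k, f (j + 1) k = k ^ f j k) {j : ℕ} (hj : 2 ≤ j) :
    StrictMonoOn (f j) (Set.Ici 1) := by
  induction j, hj using Nat.le_induction with
  | base => exact fun k _ l _ hkl => by rwa [hf2, hf2]
  | succ j hj ih =>
    intro k hk l hl hkl
    rw [hfsucc j hj, hfsucc j hj]
    calc k ^ f j k ≤ l ^ f j k := Nat.pow_le_pow_left hkl.le _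
      _ < l ^ f j l := Nat.pow_lt_pow_right (Set.mem_Ici.1 hk |>.trans_lt hkl) (ih hk hl hkl)

theorem two_mul_tower_le {f : ℕ → ℕ → ℕ} (hf2 : ∀ k, f 2 k = k)
    (hfsucc : ∀ j, 2 ≤ j → ∀ k, f (j + 1) k = k ^ f j k) {j k l : ℕ} (hj : 3 ≤ j)
    (hk : 0 < k) (hkl : k < l) : 2 * f j k ≤ f j l := by
  obtain ⟨j, rfl⟩ : ∃ j', j = j' + 1 := ⟨j - 1, by omega⟩
  have hj2 : 2 ≤ j := by omega
  have hlt : f j k < f j l := tower_strictMonoOn hf2 hfsucc hj2 hk (hk.trans hkl) hkl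
  rw [hfsucc j hj2, hfsucc j hj2]
  calc 2 * k ^ f j k ≤ l * l ^ f j k := Nat.mul_le_mul (by omega) (Nat.pow_le_pow_left hkl.le _)
    _ = l ^ (f j k + 1) := by ring
    _ ≤ l ^ f j l := Nat.pow_le_pow_right (by omega) hlt

theorem mul_pow_le_tower_succ {f : ℕ → ℕ → ℕ} (hf2 : ∀ k, f 2 k = k)
    (hfsucc : ∀ j, 2 ≤ j → ∀ k, f (j + 1) k = k ^ f j k) {i k l P : ℕ} (hi : 2 ≤ i)
    (hk : 0 < k) (hkl : k < l) (hP : P ≤ f i k) : P * l ^ P ≤ f (i + 1) l := by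
  rw [hfsucc i hi]
  rcases hi.eq_or_lt with rfl | hi3
  · rw [hf2] at hP ⊢
    calc P * l ^ P ≤ l * l ^ P := Nat.mul_le_mul_right _ (by omega)
      _ = l ^ (P + 1) := by ring
      _ ≤ l ^ l := Nat.pow_le_pow_right (by omega) (by omega)
  · calc P * l ^ P ≤ l ^ P * l ^ P :=
          Nat.mul_le_mul_right _ (Nat.lt_two_pow_self.le.trans (Nat.pow_le_pow_left (by omega) P))
      _ = l ^ (2 * P) := by rw [two_mul, pow_add]
      _ ≤ l ^ (2 * f i k) := Nat.pow_le_pow_right (by omega) (Nat.mul_le_mul_left 2 hP)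
      _ ≤ l ^ f i l := Nat.pow_le_pow_right (by omega) (two_mul_tower_le hf2 hfsucc hi3 hk hkl)

section EXP

variable {a : ℕ → ℕ} {i : ℕ}

theorem mem_EXP {x : ℕ} :
    x ∈ EXP a i ↔ ∃ e : ℕ → ℕ, (∀ t, 0 < t → t < i → e t ∈ EXP a t ∪ {1}) ∧
      x = a i ^ ∏ t ∈ Finset.Ico 1 i, e t := by
  rw [EXP]; rfl

theorem pos_of_mem_EXP {x : ℕ} (ha : 0 < a i) (hx : x ∈ EXP a i) : 0 < x := by
  obtain ⟨e, -, rfl⟩ := mem_EXP.1 hx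
  exact pow_pos ha _

theorem isGreatest_EXP {m : ℕ → ℕ} (hai : 0 < a i) (ha : ∀ t, 0 < t → t < i → 0 < a t)
    (hm : ∀ t, 0 < t → t < i → IsGreatest (EXP a t) (m t)) :
    IsGreatest (EXP a i) (a i ^ ∏ t ∈ Finset.Ico 1 i, m t) := by
  refine ⟨mem_EXP.2 ⟨m, fun t ht hti => Or.inl (hm t ht hti).1, rfl⟩, ?_⟩
  rintro x hx
  obtain ⟨e, he, rfl⟩ := mem_EXP.1 hx
  refine Nat.pow_le_pow_right hai (Finset.prod_le_prod' fun t ht => ?_)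
  obtain ⟨ht, hti⟩ := Finset.mem_Ico.1 ht
  rcases he t ht hti with h | h
  · exact (hm t ht hti).2 h
  · rw [Set.mem_singleton_iff.1 h]
    exact pos_of_mem_EXP (ha t ht hti) (hm t ht hti).1

end EXP

/-- If `f_n` is the tower function of height `n-1` (`f_2(k) = k`,
`f_{n+1}(k) = k ^ f_n(k)`), `a_1 < ... < a_n` are naturals `≥ 2`, and
`m_i = max EXP(a_1, ..., a_i)`, then `f_i(a_{i-1}) ≥ m_{i-1} ⋯ m_1`
for `2 ≤ i ≤ n`. -/
theorem tower_ge_prod_max (f : ℕ → ℕ → ℕ)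
    (hf2 : ∀ k, f 2 k = k)
    (hfsucc : ∀ j, 2 ≤ j → ∀ k, f (j + 1) k = k ^ f j k)
    (a : ℕ → ℕ) (n : ℕ)
    (ha2 : ∀ t, 1 ≤ t → t ≤ n → 2 ≤ a t)
    (hmono : StrictMonoOn a (Set.Icc 1 n))
    (m : ℕ → ℕ)
    (hm : ∀ i, 1 ≤ i → i ≤ n → IsGreatest (EXP a i) (m i)) :
    ∀ i, 2 ≤ i → i ≤ n → (∏ t ∈ Finset.Ico 1 i, m t) ≤ f i (a (i - 1)) := by
  have hapos : ∀ t, 1 ≤ t → t ≤ n → 0 < a t := fun t ht htn => by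
    have := ha2 t ht htn; omega
  have hm_eq : ∀ i, 1 ≤ i → i ≤ n → m i = a i ^ ∏ t ∈ Finset.Ico 1 i, m t := fun i hi hin =>
    (hm i hi hin).unique <| isGreatest_EXP (hapos i hi hin)
      (fun t ht hti => hapos t ht (by omega)) (fun t ht hti => hm t ht (by omega))
  intro i hi
  induction i, hi using Nat.le_induction with
  | base =>
    intro hn
    simp [hm_eq 1 le_rfl (by omega), hf2]
  | succ i hi ih =>
    intro hin
    rw [Finset.prod_Ico_succ_top (by omega), hm_eq i (by omega) (by omega), Nat.add_sub_cancel]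
    exact mul_pow_le_tower_succ hf2 hfsucc hi (hapos (i - 1) (by omega) (by omega))
      (hmono ⟨by omega, by omega⟩ ⟨by omega, by omega⟩ (by omega)) (ih (by omega))
end

section
/- Let EXP be defined recursively by EXP(a_1) = {a_1} and EXP(a_1,...,a_i) = { a_i^(e_{i-1}·...·e_1) : e_t ∈ EXP(a_1,...,a_t) ∪ {1} }, and define EXP'(a_i) = {a_i} and EXP'(a_{i_1},...,a_{i_m}) = ⋃_{s<m} { y^x : x ∈ EXP'(a_{i_1},...,a_{i_s}), y ∈ EXP'(a_{i_{s+1}},...,a_{i_m}) }. Then for every strictly increasing sequence of indices i_1 < ... < i_m, EXP'(a_{i_1},...,a_{i_m}) ⊆ EXP(a_{i_1},...,a_{i_m}). -/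
/-- `EXP'` on a list of indices `[i_1, ..., i_m]`: for a single index
`EXP' a [i] = {a i}`, and `EXP' a (i_1, ..., i_m)` is the union over `1 ≤ s < m`
of all `y ^ x` with `x ∈ EXP' a (i_1, ..., i_s)` and
`y ∈ EXP' a (i_{s+1}, ..., i_m)`. -/
def EXP' (a : ℕ → ℕ) (l : List ℕ) : Set ℕ :=
  if l.length ≤ 1 then {x | ∃ i ∈ l, x = a i}
  else ⋃ s ∈ Finset.Ico 1 l.length,
    {z | ∃ x ∈ EXP' a (l.take s), ∃ y ∈ EXP' a (l.drop s), z = y ^ x}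
termination_by l.length
decreasing_by
  all_goals (simp_all [Finset.mem_Ico]; try omega)

lemma EXP_shift (b c : ℕ → ℕ) (s : ℕ) :
    ∀ n, 1 ≤ n → (∀ t, 1 ≤ t → t ≤ n → c t = b (s + t)) → EXP c n ⊆ EXP b (s + n) := by
  intro n
  induction n using Nat.strong_induction_on with
  | _ n ih =>
    intro hn hbc x hx
    rw [EXP] at hx
    obtain ⟨e, he, hxe⟩ := hx
    rw [EXP]
    refine ⟨fun u => if u ≤ s then 1 else e (u - s), ?_, ?_⟩
    · intro u hu hus
      by_cases h : u ≤ s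
      · simp [h]
      · simp only [if_neg h]
        push_neg at h
        have ht : 1 ≤ u - s := by omega
        have ht2 : u - s < n := by omega
        rcases he (u - s) ht ht2 with h1 | h1
        · left
          have := ih (u - s) ht2 ht (fun t h1 h2 => hbc t h1 (by omega)) h1
          rwa [show s + (u - s) = u by omega] at this
        · right; exact h1
    · rw [hxe, hbc n hn le_rfl]
      congr 1
      rw [← Finset.prod_Ico_consecutive _ (by omega : 1 ≤ s + 1) (by omega : s + 1 ≤ s + n)]
      have h1 : ∏ u ∈ Finset.Ico 1 (s + 1), (if u ≤ s then 1 else e (u - s)) = 1 := by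
        apply Finset.prod_eq_one
        intro u hu
        simp only [Finset.mem_Ico] at hu
        simp [show u ≤ s by omega]
      rw [h1, one_mul]
      rw [Finset.prod_Ico_eq_prod_range, Finset.prod_Ico_eq_prod_range]
      apply Finset.prod_congr
      · congr 1; omega
      · intro i _
        have : ¬ (s + 1 + i ≤ s) := by omega
        simp only [if_neg this]
        congr 1; omega

lemma main_aux (a : ℕ → ℕ) :
    ∀ m, ∀ l : List ℕ, l.length = m → l ≠ [] →
      EXP' a l ⊆ EXP (fun t => a (l.getD (t - 1) 0)) l.length := by
  intro m
  induction m using Nat.strong_induction_on with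
  | _ m ih =>
    intro l hlen hl z hz
    rw [EXP'] at hz
    by_cases hm : l.length ≤ 1
    · rw [if_pos hm] at hz
      obtain ⟨i, hi, hzi⟩ := hz
      obtain ⟨j, rfl⟩ := List.length_eq_one_iff.mp (show l.length = 1 by have := List.length_pos_iff.mpr hl; omega)
      simp at hi
      subst hi
      rw [EXP]
      refine ⟨fun _ => 1, fun t h1 h2 => Or.inr rfl, ?_⟩
      simp [hzi]
    · rw [if_neg hm] at hz
      push_neg at hm
      simp only [Set.mem_iUnion, Finset.mem_Ico] at hz
      obtain ⟨s, ⟨hs1, hs2⟩, x, hx, y, hy, hzxy⟩ := hz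
      -- lengths
      have hts : (l.take s).length = s := by simp; omega
      have hds : (l.drop s).length = l.length - s := by simp
      -- x in EXP of B restricted
      have hxE := ih s (by omega) (l.take s) hts (by
        intro h; rw [h] at hts; simp at hts; omega) hx
      rw [hts] at hxE
      have hxB : x ∈ EXP (fun t => a (l.getD (t - 1) 0)) s := by
        have := EXP_shift (fun t => a (l.getD (t - 1) 0))
          (fun t => a ((l.take s).getD (t - 1) 0)) 0 s hs1 (fun t h1 h2 => by
            simp only [Nat.zero_add]
            congr 1
            simp [List.getD, List.getElem?_take, show t - 1 < s by omega]) hxE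
        simpa using this
      -- y in EXP of C
      have hyE := ih (l.length - s) (by omega) (l.drop s) hds (by
        intro h; rw [h] at hds; simp at hds; omega) hy
      rw [hds] at hyE
      rw [EXP] at hyE
      obtain ⟨f, hf, hyf⟩ := hyE
      have hC : ∀ t, 1 ≤ t → t ≤ l.length - s →
          (fun t => a ((l.drop s).getD (t - 1) 0)) t
            = (fun t => a (l.getD (t - 1) 0)) (s + t) := by
        intro t h1 h2
        simp only []
        have hg : (l.drop s).getD (t - 1) 0 = l.getD (s + (t - 1)) 0 := by
          simp [List.getD, List.getElem?_drop]
        rw [hg, show s + (t - 1) = s + t - 1 by omega]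
      -- top coincidence
      have hCtop : a ((l.drop s).getD (l.length - s - 1) 0) = a (l.getD (l.length - 1) 0) := by
        have := hC (l.length - s) (by omega) le_rfl
        simpa [show s + (l.length - s) - 1 = l.length - 1 by omega] using this
      rw [EXP]
      refine ⟨fun u => if u < s then 1 else if u = s then x else f (u - s), ?_, ?_⟩
      · intro u hu hum
        by_cases h1 : u < s
        · simp [h1]
        · by_cases h2 : u = s
          · simp only [if_neg (by omega : ¬ u < s), if_pos h2]
            subst h2; exact Or.inl hxB
          · simp only [if_neg h1, if_neg h2]
            have ht1 : 0 < u - s := by omega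
            have ht2 : u - s < l.length - s := by omega
            rcases hf (u - s) ht1 ht2 with h3 | h3
            · left
              have := EXP_shift (fun t => a (l.getD (t - 1) 0))
                (fun t => a ((l.drop s).getD (t - 1) 0)) s (u - s) (by omega)
                (fun t ha hb => hC t ha (by omega)) h3
              rwa [show s + (u - s) = u by omega] at this
            · right; exact h3
      · rw [hzxy, hyf]
        simp only []
        rw [hCtop, ← pow_mul]
        congr 1
        rw [← Finset.prod_Ico_consecutive _ (by omega : 1 ≤ s + 1) (by omega : s + 1 ≤ l.length)]
        have h1 : ∏ u ∈ Finset.Ico 1 (s + 1),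
            (if u < s then 1 else if u = s then x else f (u - s))
              = x := by
          rw [Finset.prod_Ico_succ_top (by omega : 1 ≤ s)]
          have : ∏ u ∈ Finset.Ico 1 s,
              (if u < s then 1 else if u = s then x else f (u - s)) = 1 := by
            apply Finset.prod_eq_one
            intro u hu
            simp only [Finset.mem_Ico] at hu
            simp [hu.2]
          rw [this, one_mul]
          simp
        rw [h1]
        rw [mul_comm]
        congr 1
        rw [Finset.prod_Ico_eq_prod_range, Finset.prod_Ico_eq_prod_range]
        apply Finset.prod_congr
        · rfl
        · intro i _
          have e1 : ¬ (s + 1 + i < s) := by omega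
          have e2 : ¬ (s + 1 + i = s) := by omega
          simp only [if_neg e1, if_neg e2]
          congr 1
          omega

/-- All iterated exponentiations of distinct elements, taken with indices in
decreasing order, belong to the structured set of exponentiations: for a
strictly increasing list of indices `i_1 < ... < i_m`,
`EXP'(a_{i_1}, ..., a_{i_m}) ⊆ EXP(a_{i_1}, ..., a_{i_m})`. -/
theorem EXP'_subset_EXP (a : ℕ → ℕ) (ha : ∀ j, 2 ≤ a j)
    (l : List ℕ) (hl : l ≠ []) (hsorted : List.Chain' (· < ·) l) :
    EXP' a l ⊆ EXP (fun t => a (l.getD (t - 1) 0)) l.length := by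
  exact main_aux a l.length l rfl hl
end

section
/- Let N = 1 and let Φ = (f_n)_{n≥2} where f_n is the tower of exponentiations of height n−1 (f_2(k)=k, f_{n+1}(k)=k^{f_n(k)}). Then for every strictly increasing sequence (a_n) of naturals ≥ 2 and every n, EXP(a_1,...,a_n) ⊆ EXP_{1,Φ}(a_1,...,a_n), where EXP_{N,Φ}(a_1,...,a_i) = { a_i^(∏_{t=1}^{i-1} a_t^{λ_t}) : 0 ≤ λ_1 ≤ N, 0 ≤ λ_t ≤ f_t(a_{t-1}) for 2 ≤ t ≤ i−1 }. -/
/-- The enlarged sets of exponentiations `EXP_{N,Φ}(a_1, ..., a_i)`: all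
`a_i ^ (∏_{t=1}^{i-1} a_t ^ λ_t)` with `0 ≤ λ_1 ≤ N` and
`0 ≤ λ_t ≤ f_t(a_{t-1})` for `2 ≤ t ≤ i - 1`. -/
def EXPNPhi (N : ℕ) (f : ℕ → ℕ → ℕ) (a : ℕ → ℕ) (i : ℕ) : Set ℕ :=
  { x | ∃ lam : ℕ → ℕ, lam 1 ≤ N ∧
      (∀ t, 2 ≤ t → t ≤ i - 1 → lam t ≤ f t (a (t - 1))) ∧
      x = a i ^ ∏ t ∈ Finset.Ico 1 i, a t ^ lam t }

/-!
By strong induction on `n`, each factor `e_t ∈ EXP(a_1, …, a_t)` is already of the form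
`a_t ^ P_t` with `P_t = ∏_{s<t} a_s ^ λ_s` admissible, so it suffices that admissible products
satisfy `P_t ≤ f_t(a_{t-1})`. Going from `t` to `t + 1` multiplies the product by
`a_t ^ λ_t ≤ a_t ^ f_t(a_{t-1})`, and `f_t(k) * b ^ f_t(k) ≤ b ^ f_t(b) = f_{t+1}(b)` whenever
`2 ≤ k < b`, which is proved by induction on `t`.
-/

section Tower

variable {f : ℕ → ℕ → ℕ} (hf2 : ∀ k, f 2 k = k)
  (hfsucc : ∀ j, 2 ≤ j → ∀ k, f (j + 1) k = k ^ f j k)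

include hf2 hfsucc

lemma two_le_tower {j k : ℕ} (hj : 2 ≤ j) (hk : 2 ≤ k) : 2 ≤ f j k := by
  induction j, hj using Nat.le_induction with
  | base => rwa [hf2]
  | succ j hj ih =>
    rw [hfsucc j hj]
    calc 2 ≤ k ^ 1 := by rwa [pow_one]
      _ ≤ k ^ f j k := Nat.pow_le_pow_right (by omega) (by omega)

lemma tower_mul_pow_le {j k b : ℕ} (hj : 2 ≤ j) (hk : 2 ≤ k) (hkb : k < b) :
    f j k * b ^ f j k ≤ b ^ f j b := by
  induction j, hj using Nat.le_induction with
  | base =>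
    rw [hf2, hf2]
    calc k * b ^ k ≤ b * b ^ k := Nat.mul_le_mul_right _ hkb.le
      _ = b ^ (k + 1) := by ring
      _ ≤ b ^ b := Nat.pow_le_pow_right (by omega) hkb
  | succ j hj ih =>
    rw [hfsucc j hj, hfsucc j hj]
    set m := f j k
    have hm : 2 ≤ m := two_le_tower hf2 hfsucc hj hk
    have hbm : 2 ≤ b ^ m := le_trans (by omega) (Nat.le_self_pow (by omega) b)
    -- `k ^ m ≤ b ^ m`, and `x + y ≤ x * y` for `x, y ≥ 2`
    have hsum : m + k ^ m ≤ m * b ^ m := by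
      nlinarith [Nat.pow_le_pow_left hkb.le m]
    calc k ^ m * b ^ k ^ m ≤ b ^ m * b ^ k ^ m :=
          Nat.mul_le_mul_right _ (Nat.pow_le_pow_left hkb.le m)
      _ = b ^ (m + k ^ m) := by rw [pow_add]
      _ ≤ b ^ (m * b ^ m) := Nat.pow_le_pow_right (by omega) hsum
      _ ≤ b ^ b ^ f j b := Nat.pow_le_pow_right (by omega) ih

end Tower

section Exponents

variable {f : ℕ → ℕ → ℕ} (hf2 : ∀ k, f 2 k = k)
  (hfsucc : ∀ j, 2 ≤ j → ∀ k, f (j + 1) k = k ^ f j k)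
  {a : ℕ → ℕ} (hmono : StrictMono a) (ha : ∀ t, 2 ≤ a t)

include hf2 hfsucc hmono ha

lemma prod_pow_le_tower {t : ℕ} (ht : 2 ≤ t) {lam : ℕ → ℕ} (hlam1 : lam 1 ≤ 1)
    (hlam : ∀ s, 2 ≤ s → s ≤ t - 1 → lam s ≤ f s (a (s - 1))) :
    ∏ s ∈ Finset.Ico 1 t, a s ^ lam s ≤ f t (a (t - 1)) := by
  induction t, ht using Nat.le_induction with
  | base =>
    rw [show Finset.Ico 1 2 = {1} from rfl, Finset.prod_singleton, hf2]
    calc a 1 ^ lam 1 ≤ a 1 ^ 1 := Nat.pow_le_pow_right (by linarith [ha 1]) hlam1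
      _ = a 1 := pow_one _
  | succ t ht ih =>
    have hlamt : lam t ≤ f t (a (t - 1)) := hlam t ht (by omega)
    have hprev : ∏ s ∈ Finset.Ico 1 t, a s ^ lam s ≤ f t (a (t - 1)) :=
      ih fun s hs hst => hlam s hs (by omega)
    rw [Finset.prod_Ico_succ_top (by omega), Nat.add_sub_cancel, hfsucc t ht]
    calc (∏ s ∈ Finset.Ico 1 t, a s ^ lam s) * a t ^ lam t
        ≤ f t (a (t - 1)) * a t ^ f t (a (t - 1)) :=
          Nat.mul_le_mul hprev (Nat.pow_le_pow_right (by linarith [ha t]) hlamt)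
      _ ≤ a t ^ f t (a t) :=
          tower_mul_pow_le hf2 hfsucc ht (ha _) (hmono (by omega))

lemma exists_pow_eq_of_mem_EXPNPhi {t y : ℕ} (ht : 1 ≤ t) (hy : y ∈ EXPNPhi 1 f a t ∪ {1}) :
    ∃ m, y = a t ^ m ∧ (t = 1 → m ≤ 1) ∧ (2 ≤ t → m ≤ f t (a (t - 1))) := by
  rcases hy with ⟨lam, hlam1, hlam, rfl⟩ | rfl
  · refine ⟨_, rfl, fun ht1 => ?_, fun ht2 => prod_pow_le_tower hf2 hfsucc hmono ha ht2 hlam1 hlam⟩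
    subst ht1
    simp
  · exact ⟨0, (pow_zero _).symm, fun _ => zero_le_one, fun _ => Nat.zero_le _⟩

end Exponents

/-- With `N = 1` and `Φ = (f_n)` the tower functions of height `n-1`
(`f_2(k) = k`, `f_{n+1}(k) = k ^ f_n(k)`), for every strictly increasing
sequence of naturals `≥ 2` one has `EXP(a_1,...,a_n) ⊆ EXP_{1,Φ}(a_1,...,a_n)`. -/
theorem EXP_subset_EXPNPhi (f : ℕ → ℕ → ℕ)
    (hf2 : ∀ k, f 2 k = k)
    (hfsucc : ∀ j, 2 ≤ j → ∀ k, f (j + 1) k = k ^ f j k)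
    (a : ℕ → ℕ) (hmono : StrictMono a) (ha : ∀ t, 2 ≤ a t) :
    ∀ n, 1 ≤ n → EXP a n ⊆ EXPNPhi 1 f a n := by
  intro n
  induction n using Nat.strong_induction_on with
  | _ n ih =>
    intro _ x hx
    rw [EXP] at hx
    obtain ⟨e, he, rfl⟩ := hx
    have hexp : ∀ t, ∃ m, (0 < t → t < n → e t = a t ^ m) ∧ (t = 1 → m ≤ 1) ∧
        (2 ≤ t → m ≤ f t (a (t - 1))) := by
      intro t
      by_cases hrange : 0 < t ∧ t < n
      · have hmem : e t ∈ EXPNPhi 1 f a t ∪ {1} :=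
          Set.union_subset_union_left _ (ih t hrange.2 hrange.1) (he t hrange.1 hrange.2)
        obtain ⟨m, hm, hm1, hm2⟩ :=
          exists_pow_eq_of_mem_EXPNPhi hf2 hfsucc hmono ha hrange.1 hmem
        exact ⟨m, fun _ _ => hm, hm1, hm2⟩
      · exact ⟨0, fun h0 hn => absurd ⟨h0, hn⟩ hrange, fun _ => zero_le_one,
          fun _ => Nat.zero_le _⟩
    choose lam hlam using hexp
    refine ⟨lam, (hlam 1).2.1 rfl, fun t ht _ => (hlam t).2.2 ht, ?_⟩
    congr 1
    refine Finset.prod_congr rfl fun t htn => ?_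
    rw [Finset.mem_Ico] at htn
    exact (hlam t).1 htn.1 htn.2
end

section
/- For every finite coloring of ℕ into two colors, there exists a monochromatic exponential triple: naturals a, b ≥ 2 with a ≠ b such that a, b, and a^b all have the same color. -/
private lemma sisto_tow (a b : ℕ) : ((2:ℕ)^(2^a))^(2^(2^b)) = 2^(2^(a+2^b)) := by
  rw [← pow_mul, ← pow_add]

private lemma sisto_ne {a b : ℕ} (h : a ≠ b) : (2:ℕ)^(2^a) ≠ 2^(2^b) := fun he =>
  h (Nat.pow_right_injective (le_refl 2) (Nat.pow_right_injective (le_refl 2) he))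

private lemma sisto_two_le (a : ℕ) : 2 ≤ (2:ℕ)^(2^a) := by
  calc (2:ℕ) = 2^1 := (pow_one 2).symm
  _ ≤ 2^(2^a) := Nat.pow_le_pow_right (by norm_num) Nat.one_le_two_pow

set_option synthInstance.maxSize 400 in
set_option maxHeartbeats 1000000 in
private lemma sisto_aux : ∀ v1 v2 v3 v4 v5 v7 v9 v13 v15 v21 v23 : Fin 2,
    (v1 = v2 ∧ v1 = v5) ∨ (v1 = v3 ∧ v1 = v9) ∨ (v2 = v1 ∧ v2 = v4) ∨ (v3 = v1 ∧ v3 = v5) ∨ (v3 = v2 ∧ v3 = v7) ∨ (v5 = v1 ∧ v5 = v7) ∨ (v5 = v2 ∧ v5 = v9) ∨ (v5 = v3 ∧ v5 = v13) ∨ (v5 = v4 ∧ v5 = v21) ∨ (v7 = v1 ∧ v7 = v9) ∨ (v7 = v3 ∧ v7 = v15) ∨ (v7 = v4 ∧ v7 = v23) ∨ (v9 = v2 ∧ v9 = v13) ∨ (v13 = v1 ∧ v13 = v15) ∨ (v13 = v3 ∧ v13 = v21) ∨ (v15 = v3 ∧ v15 = v23) ∨ (v21 = v1 ∧ v21 =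 v23) := by decide

/-- Sisto's theorem: every 2-coloring of ℕ admits a monochromatic exponential
triple `{a, b, a ^ b}` with `a, b ≥ 2` and `a ≠ b`. -/
theorem sisto (c : ℕ → Fin 2) :
    ∃ a b : ℕ, 2 ≤ a ∧ 2 ≤ b ∧ a ≠ b ∧ c a = c b ∧ c a = c (a ^ b) := by
  have h := sisto_aux (c (2^(2^1))) (c (2^(2^2))) (c (2^(2^3))) (c (2^(2^4))) (c (2^(2^5))) (c (2^(2^7))) (c (2^(2^9))) (c (2^(2^13))) (c (2^(2^15))) (c (2^(2^21))) (c (2^(2^23)))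
  rcases h with ⟨h1,h2⟩|⟨h1,h2⟩|⟨h1,h2⟩|⟨h1,h2⟩|⟨h1,h2⟩|⟨h1,h2⟩|⟨h1,h2⟩|⟨h1,h2⟩|⟨h1,h2⟩|⟨h1,h2⟩|⟨h1,h2⟩|⟨h1,h2⟩|⟨h1,h2⟩|⟨h1,h2⟩|⟨h1,h2⟩|⟨h1,h2⟩|⟨h1,h2⟩
  · exact ⟨2^(2^1), 2^(2^2), sisto_two_le 1, sisto_two_le 2, sisto_ne (by norm_num), h1, by rw [sisto_tow, show 1+2^2 = 5 from by norm_num]; exact h2⟩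
  · exact ⟨2^(2^1), 2^(2^3), sisto_two_le 1, sisto_two_le 3, sisto_ne (by norm_num), h1, by rw [sisto_tow, show 1+2^3 = 9 from by norm_num]; exact h2⟩
  · exact ⟨2^(2^2), 2^(2^1), sisto_two_le 2, sisto_two_le 1, sisto_ne (by norm_num), h1, by rw [sisto_tow, show 2+2^1 = 4 from by norm_num]; exact h2⟩
  · exact ⟨2^(2^3), 2^(2^1), sisto_two_le 3, sisto_two_le 1, sisto_ne (by norm_num), h1, by rw [sisto_tow, show 3+2^1 = 5 from by norm_num]; exact h2⟩
  · exact ⟨2^(2^3), 2^(2^2), sisto_two_le 3, sisto_two_le 2, sisto_ne (by norm_num), h1, by rw [sisto_tow, show 3+2^2 = 7 from by norm_num]; exact h2⟩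
  · exact ⟨2^(2^5), 2^(2^1), sisto_two_le 5, sisto_two_le 1, sisto_ne (by norm_num), h1, by rw [sisto_tow, show 5+2^1 = 7 from by norm_num]; exact h2⟩
  · exact ⟨2^(2^5), 2^(2^2), sisto_two_le 5, sisto_two_le 2, sisto_ne (by norm_num), h1, by rw [sisto_tow, show 5+2^2 = 9 from by norm_num]; exact h2⟩
  · exact ⟨2^(2^5), 2^(2^3), sisto_two_le 5, sisto_two_le 3, sisto_ne (by norm_num), h1, by rw [sisto_tow, show 5+2^3 = 13 from by norm_num]; exact h2⟩
  · exact ⟨2^(2^5), 2^(2^4), sisto_two_le 5, sisto_two_le 4, sisto_ne (by norm_num), h1, by rw [sisto_tow, show 5+2^4 = 21 from by norm_num]; exact h2⟩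
  · exact ⟨2^(2^7), 2^(2^1), sisto_two_le 7, sisto_two_le 1, sisto_ne (by norm_num), h1, by rw [sisto_tow, show 7+2^1 = 9 from by norm_num]; exact h2⟩
  · exact ⟨2^(2^7), 2^(2^3), sisto_two_le 7, sisto_two_le 3, sisto_ne (by norm_num), h1, by rw [sisto_tow, show 7+2^3 = 15 from by norm_num]; exact h2⟩
  · exact ⟨2^(2^7), 2^(2^4), sisto_two_le 7, sisto_two_le 4, sisto_ne (by norm_num), h1, by rw [sisto_tow, show 7+2^4 = 23 from by norm_num]; exact h2⟩
  · exact ⟨2^(2^9), 2^(2^2), sisto_two_le 9, sisto_two_le 2, sisto_ne (by norm_num), h1, by rw [sisto_tow, show 9+2^2 = 13 from by norm_num]; exact h2⟩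
  · exact ⟨2^(2^13), 2^(2^1), sisto_two_le 13, sisto_two_le 1, sisto_ne (by norm_num), h1, by rw [sisto_tow, show 13+2^1 = 15 from by norm_num]; exact h2⟩
  · exact ⟨2^(2^13), 2^(2^3), sisto_two_le 13, sisto_two_le 3, sisto_ne (by norm_num), h1, by rw [sisto_tow, show 13+2^3 = 21 from by norm_num]; exact h2⟩
  · exact ⟨2^(2^15), 2^(2^3), sisto_two_le 15, sisto_two_le 3, sisto_ne (by norm_num), h1, by rw [sisto_tow, show 15+2^3 = 23 from by norm_num]; exact h2⟩
  · exact ⟨2^(2^21), 2^(2^1), sisto_two_le 21, sisto_two_le 1, sisto_ne (by norm_num), h1, by rw [sisto_tow, show 21+2^1 = 23 from by norm_num]; exact h2⟩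
end
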